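/- For every feasible point of the MICP formulation there exists a feasible point of the nonconvex formulation with the same objective value. Consequently, the optimal value of the nonconvex formulation is at most the optimal value of the MICP formulation. -/

import Mathlib

open scoped BigOperators Classical

noncomputable section

/-- The Euclidean plane ℝ². -/
abbrev Plane := EuclideanSpace ℝ (Fin 2)

/-- Nodes of the graph: `Sum.inl i` is the segment node `i ∈ V_seg`,
`Sum.inr false` is the depot `s`, and `Sum.inr true` is the depot copy `s'`. -/
abbrev Node (ι : Type*) := ι ⊕ Bool

/-- The data of an MA-MT-TSP instance: a finite type `ι` of segment nodes, a finite
type `υ` of targets, a cluster assignment `cl` whose surjectivity expresses that every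
cluster is nonempty, time windows `tlo i ≤ thi i`, start positions `pos`, velocities
`vel` (vanishing at the depot and its copy), a maximum speed `vmax > 0`, and a number
of agents `m ≥ 1`. -/
structure MTData (ι υ : Type*) where
  cl : ι → υ
  cl_surj : Function.Surjective cl
  tlo : Node ι → ℝ
  thi : Node ι → ℝ
  tw : ∀ i, tlo i ≤ thi i
  pos : Node ι → Plane
  vel : Node ι → Plane
  vel_s : vel (Sum.inr false) = 0
  vel_s' : vel (Sum.inr true) = 0
  vmax : ℝ
  vmax_pos : 0 < vmax
  m : ℕ
  m_pos : 1 ≤ m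

variable {ι υ : Type*} [Fintype ι] [Fintype υ]

/-- The edge relation: from the depot `s` to every segment node, between segment nodes
in different clusters, and from every segment node to the depot copy `s'`. -/
def isEdge (D : MTData ι υ) : Node ι → Node ι → Prop
  | Sum.inr false, Sum.inl _ => True
  | Sum.inl i, Sum.inl j => D.cl i ≠ D.cl j
  | Sum.inl _, Sum.inr true => True
  | _, _ => False

/-- The edge set `E` as a finite set of ordered pairs of nodes. -/
def edges (D : MTData ι υ) : Finset (Node ι × Node ι) :=
  Finset.univ.filter fun e => isEdge D e.1 e.2

/-- `E_i^in`: the edges of `E` entering node `i`. -/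
def inE (D : MTData ι υ) (i : Node ι) : Finset (Node ι × Node ι) :=
  (edges D).filter fun e => e.2 = i

/-- `E_i^out`: the edges of `E` exiting node `i`. -/
def outE (D : MTData ι υ) (i : Node ι) : Finset (Node ι × Node ι) :=
  (edges D).filter fun e => e.1 = i

/-- A point of the nonconvex formulation: edge variables `y`, `l`, `lxy`, `zp`, `zt`,
`zp'`, `zt'` for each edge and agent, and node variables `t`, `p` for each node and
agent.  Agents are indexed by `Fin m`. -/
structure NCPoint (ι : Type*) (m : ℕ) where
  y : Node ι × Node ι → Fin m → ℝ
  l : Node ι × Node ι → Fin m → ℝ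
  lxy : Node ι × Node ι → Fin m → Plane
  zp : Node ι × Node ι → Fin m → Plane
  zt : Node ι × Node ι → Fin m → ℝ
  zp' : Node ι × Node ι → Fin m → Plane
  zt' : Node ι × Node ι → Fin m → ℝ
  t : Node ι → Fin m → ℝ
  p : Node ι → Fin m → Plane

variable {ι υ : Type*} [Fintype ι] [Fintype υ]

/-- Feasibility for the nonconvex formulation. -/
def NCFeas (D : MTData ι υ) (P : NCPoint ι D.m) : Prop :=
  (∀ e ∈ edges D, ∀ k, P.y e k = 0 ∨ P.y e k = 1) ∧
  (∀ e ∈ edges D, ∀ k, 0 ≤ P.l e k) ∧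
  (∀ k, ∑ e ∈ outE D (Sum.inr false), P.y e k ≤ 1) ∧
  (∀ k, ∑ e ∈ inE D (Sum.inr true), P.y e k ≤ 1) ∧
  (∀ u : υ, ∑ k, ∑ i ∈ Finset.univ.filter (fun i => D.cl i = u),
      ∑ e ∈ inE D (Sum.inl i), P.y e k = 1) ∧
  (∀ i : ι, ∀ k, ∑ e ∈ inE D (Sum.inl i), P.y e k = ∑ e ∈ outE D (Sum.inl i), P.y e k) ∧
  (∀ i : Node ι, ∀ k, D.tlo i ≤ P.t i k ∧ P.t i k ≤ D.thi i) ∧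
  (∀ i : Node ι, ∀ k, P.p i k = D.pos i + (P.t i k - D.tlo i) • D.vel i) ∧
  (∀ e ∈ edges D, ∀ k,
    P.zp e k = P.y e k • P.p e.1 k ∧
    P.zt e k = P.y e k * P.t e.1 k ∧
    P.zp' e k = P.y e k • P.p e.2 k ∧
    P.zt' e k = P.y e k * P.t e.2 k ∧
    P.l e k ≤ D.vmax * (P.zt' e k - P.zt e k) ∧
    P.lxy e k = P.zp' e k - P.zp e k ∧
    ‖P.lxy e k‖ ^ 2 ≤ P.l e k ^ 2)

/-- Objective of the nonconvex formulation. -/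
def NCObj (D : MTData ι υ) (P : NCPoint ι D.m) : ℝ :=
  ∑ k, ∑ e ∈ edges D, P.l e k

/-- A point of the MICP formulation: a single set of edge variables, together with the
integer depot flow `α` (stated as a real number required to be integral). -/
structure MICPPoint (ι : Type*) where
  y : Node ι × Node ι → ℝ
  l : Node ι × Node ι → ℝ
  lxy : Node ι × Node ι → Plane
  zp : Node ι × Node ι → Plane
  zt : Node ι × Node ι → ℝ
  zp' : Node ι × Node ι → Plane
  zt' : Node ι × Node ι → ℝ
  α : ℝ

/-- Feasibility for the MICP formulation. -/
def MICPFeas (D : MTData ι υ) (Q : MICPPoint ι) : Prop :=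
  (∀ e ∈ edges D, Q.y e = 0 ∨ Q.y e = 1) ∧
  (∀ e ∈ edges D, 0 ≤ Q.l e) ∧
  (∃ n : ℤ, Q.α = n) ∧ (1 ≤ Q.α) ∧ (Q.α ≤ (D.m : ℝ)) ∧
  (∑ e ∈ outE D (Sum.inr false), Q.y e = Q.α) ∧
  (∑ e ∈ inE D (Sum.inr true), Q.y e = Q.α) ∧
  (∀ u : υ, ∑ i ∈ Finset.univ.filter (fun i => D.cl i = u),
      ∑ e ∈ inE D (Sum.inl i), Q.y e = 1) ∧
  (∀ i : ι, ∑ e ∈ inE D (Sum.inl i), Q.y e = ∑ e ∈ outE D (Sum.inl i), Q.y e) ∧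
  (∀ i : ι, ∑ e ∈ inE D (Sum.inl i), Q.zt' e = ∑ e ∈ outE D (Sum.inl i), Q.zt e) ∧
  (∀ e ∈ edges D,
    Q.y e * D.tlo e.1 ≤ Q.zt e ∧ Q.zt e ≤ Q.y e * D.thi e.1 ∧
    Q.y e * D.tlo e.2 ≤ Q.zt' e ∧ Q.zt' e ≤ Q.y e * D.thi e.2 ∧
    Q.zp e = Q.zt e • D.vel e.1 + Q.y e • (D.pos e.1 - D.tlo e.1 • D.vel e.1) ∧
    Q.zp' e = Q.zt' e • D.vel e.2 + Q.y e • (D.pos e.2 - D.tlo e.2 • D.vel e.2) ∧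
    Q.l e ≤ D.vmax * (Q.zt' e - Q.zt e) ∧
    Q.lxy e = Q.zp' e - Q.zp e ∧
    ‖Q.lxy e‖ ^ 2 ≤ Q.l e ^ 2)

/-- Objective of the MICP formulation. -/
def MICPObj (D : MTData ι υ) (Q : MICPPoint ι) : ℝ :=
  ∑ e ∈ edges D, Q.l e

/-! In an MICP solution each segment node has at most one used in-edge and at most one used
out-edge, so the used edges form paths from the depot `s` to its copy `s'` together with cycles
through segment nodes. Tracing a used edge back to the depot edge it starts from, and numbering
the at most `m` used depot edges, hands each path to its own agent; the agent takes over the MICP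
variables of its edges, and its node times are read off those edges.

For the infima: summing a nonconvex solution over the agents gives an MICP solution with the same
objective, unless no agent leaves the depot. In that case the elapsed times telescope to zero
along every agent's edges, so the objective is `0`. -/

open Relation

section EdgeStructure

variable {ι υ : Type*} [Fintype ι] {D : MTData ι υ} {e : Node ι × Node ι}

lemma mem_edges : e ∈ edges D ↔ isEdge D e.1 e.2 := by simp [edges]

lemma mem_inE {j : Node ι} : e ∈ inE D j ↔ e ∈ edges D ∧ e.2 = j := by simp [inE]

lemma mem_outE {j : Node ι} : e ∈ outE D j ↔ e ∈ edges D ∧ e.1 = j := by simp [outE]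

lemma fst_cases_of_mem_edges (he : e ∈ edges D) :
    (∃ i, e.1 = Sum.inl i) ∨ e.1 = Sum.inr false := by
  rw [mem_edges] at he
  rcases e with ⟨i | _ | _, j | _ | _⟩ <;> simp_all [isEdge]

lemma snd_cases_of_mem_edges (he : e ∈ edges D) :
    (∃ i, e.2 = Sum.inl i) ∨ e.2 = Sum.inr true := by
  rw [mem_edges] at he
  rcases e with ⟨i | _ | _, j | _ | _⟩ <;> simp_all [isEdge]

lemma fst_eq_inl_of_snd_eq_inr_true (he : e ∈ edges D) (h : e.2 = Sum.inr true) :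
    ∃ i, e.1 = Sum.inl i := by
  rw [mem_edges] at he
  rcases e with ⟨i | _ | _, j | _ | _⟩ <;> simp_all [isEdge]

lemma fst_ne_inr_true_of_mem_edges (he : e ∈ edges D) : e.1 ≠ Sum.inr true := by
  rcases fst_cases_of_mem_edges he with ⟨i, h⟩ | h <;> simp [h]

lemma snd_ne_inr_false_of_mem_edges (he : e ∈ edges D) : e.2 ≠ Sum.inr false := by
  rcases snd_cases_of_mem_edges he with ⟨i, h⟩ | h <;> simp [h]

variable (D) in
lemma inE_inr_false : inE D (Sum.inr false) = ∅ :=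
  Finset.eq_empty_of_forall_notMem fun _ he =>
    snd_ne_inr_false_of_mem_edges (mem_inE.1 he).1 (mem_inE.1 he).2

variable (D) in
lemma outE_inr_true : outE D (Sum.inr true) = ∅ :=
  Finset.eq_empty_of_forall_notMem fun _ he =>
    fst_ne_inr_true_of_mem_edges (mem_outE.1 he).1 (mem_outE.1 he).2

lemma sum_edges_mul_sub_eq (y : Node ι × Node ι → ℝ) (φ : Node ι → ℝ)
    (hcons : ∀ i : ι, ∑ e ∈ inE D (Sum.inl i), y e = ∑ e ∈ outE D (Sum.inl i), y e) :
    ∑ e ∈ edges D, y e * (φ e.2 - φ e.1) =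
      φ (Sum.inr true) * ∑ e ∈ inE D (Sum.inr true), y e -
        φ (Sum.inr false) * ∑ e ∈ outE D (Sum.inr false), y e := by
  have hin : ∑ e ∈ edges D, y e * φ e.2 = ∑ j, φ j * ∑ e ∈ inE D j, y e := by
    rw [← Finset.sum_fiberwise (edges D) Prod.snd]
    refine Finset.sum_congr rfl fun j _ => ?_
    rw [Finset.mul_sum]
    exact Finset.sum_congr rfl fun e he => by rw [(Finset.mem_filter.1 he).2, mul_comm]
  have hout : ∑ e ∈ edges D, y e * φ e.1 = ∑ j, φ j * ∑ e ∈ outE D j, y e := by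
    rw [← Finset.sum_fiberwise (edges D) Prod.fst]
    refine Finset.sum_congr rfl fun j _ => ?_
    rw [Finset.mul_sum]
    exact Finset.sum_congr rfl fun e he => by rw [(Finset.mem_filter.1 he).2, mul_comm]
  simp only [mul_sub, Finset.sum_sub_distrib, hin, hout, Fintype.sum_sum_type, Fintype.sum_bool,
    inE_inr_false, outE_inr_true, Finset.sum_empty, mul_zero, hcons]
  ring

end EdgeStructure

section Tours

variable {ι υ : Type*} [Fintype ι] (D : MTData ι υ) (Q : MICPPoint ι)

def IsUsed (e : Node ι × Node ι) : Prop := e ∈ edges D ∧ Q.y e = 1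

def Consecutive (e f : Node ι × Node ι) : Prop := IsUsed D Q e ∧ IsUsed D Q f ∧ e.2 = f.1

def depotEdges : Finset (Node ι × Node ι) :=
  (outE D (Sum.inr false)).filter fun e => Q.y e = 1

def IsOrigin (a e : Node ι × Node ι) : Prop :=
  a ∈ depotEdges D Q ∧ ReflTransGen (Consecutive D Q) a e

variable {D Q} {a e f : Node ι × Node ι}

lemma mem_depotEdges : a ∈ depotEdges D Q ↔ IsUsed D Q a ∧ a.1 = Sum.inr false := by
  simp only [depotEdges, Finset.mem_filter, mem_outE, IsUsed]
  tauto

lemma Consecutive.exists_snd_eq_inl (h : Consecutive D Q e f) :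
    ∃ i, e.2 = Sum.inl i ∧ f.1 = Sum.inl i := by
  rcases snd_cases_of_mem_edges h.1.1 with ⟨i, hi⟩ | hi
  · exact ⟨i, hi, h.2.2 ▸ hi⟩
  · exact absurd (h.2.2 ▸ hi) (fst_ne_inr_true_of_mem_edges h.2.1.1)

lemma eq_of_reflTransGen_of_mem_depotEdges (ha : a ∈ depotEdges D Q)
    (h : ReflTransGen (Consecutive D Q) e a) : e = a := by
  rcases h.cases_tail with h | ⟨c, -, hc⟩
  · exact h.symm
  · obtain ⟨i, -, hi⟩ := hc.exists_snd_eq_inl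
    simp [(mem_depotEdges.1 ha).2] at hi

lemma eq_of_reflTransGen_of_snd_eq_inr_true (he : e.2 = Sum.inr true)
    (h : ReflTransGen (Consecutive D Q) e f) : e = f := by
  rcases h.cases_head with h | ⟨c, hc, -⟩
  · exact h
  · obtain ⟨i, hi, -⟩ := hc.exists_snd_eq_inl
    simp [he] at hi

end Tours

namespace MICPFeas

variable {ι υ : Type*} [Fintype ι] {D : MTData ι υ} {Q : MICPPoint ι} (hQ : MICPFeas D Q)
  {s : Finset (Node ι × Node ι)} {a b e f : Node ι × Node ι} {i : ι}
include hQ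

lemma sum_inE_eq_sum_outE (i : ι) :
    ∑ e ∈ inE D (Sum.inl i), Q.y e = ∑ e ∈ outE D (Sum.inl i), Q.y e :=
  hQ.2.2.2.2.2.2.2.2.1 i

lemma sum_cluster (u : υ) :
    ∑ i ∈ Finset.univ.filter (fun i => D.cl i = u), ∑ e ∈ inE D (Sum.inl i), Q.y e = 1 :=
  hQ.2.2.2.2.2.2.2.1 u

lemma y_nonneg (he : e ∈ edges D) : 0 ≤ Q.y e := by
  rcases hQ.1 e he with h | h <;> simp [h]

lemma eq_zero_of_not_isUsed (he : e ∈ edges D) (hu : ¬ IsUsed D Q e) :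
    Q.zt e = 0 ∧ Q.zt' e = 0 ∧ Q.l e = 0 := by
  have hy : Q.y e = 0 := (hQ.1 e he).resolve_right fun h => hu ⟨he, h⟩
  obtain ⟨h₁, h₂, h₃, h₄, -, -, hl, -⟩ := hQ.2.2.2.2.2.2.2.2.2.2 e he
  simp only [hy, zero_mul] at h₁ h₂ h₃ h₄
  have hzt : Q.zt e = 0 := le_antisymm h₂ h₁
  have hzt' : Q.zt' e = 0 := le_antisymm h₄ h₃
  refine ⟨hzt, hzt', le_antisymm ?_ (hQ.2.1 e he)⟩
  simpa [hzt, hzt'] using hl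

lemma zt_mem_window (he : IsUsed D Q e) :
    (D.tlo e.1 ≤ Q.zt e ∧ Q.zt e ≤ D.thi e.1) ∧ (D.tlo e.2 ≤ Q.zt' e ∧ Q.zt' e ≤ D.thi e.2) := by
  obtain ⟨h₁, h₂, h₃, h₄, -⟩ := hQ.2.2.2.2.2.2.2.2.2.2 e he.1
  simp only [he.2, one_mul] at h₁ h₂ h₃ h₄
  exact ⟨⟨h₁, h₂⟩, h₃, h₄⟩

lemma sum_inE_le_one (i : ι) : ∑ e ∈ inE D (Sum.inl i), Q.y e ≤ 1 :=
  calc ∑ e ∈ inE D (Sum.inl i), Q.y e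
      ≤ ∑ j ∈ Finset.univ.filter (fun j => D.cl j = D.cl i), ∑ e ∈ inE D (Sum.inl j), Q.y e :=
        Finset.single_le_sum (f := fun j => ∑ e ∈ inE D (Sum.inl j), Q.y e)
          (fun _ _ => Finset.sum_nonneg fun _ he => hQ.y_nonneg (mem_inE.1 he).1) (by simp)
    _ = 1 := hQ.sum_cluster (D.cl i)

lemma eq_of_isUsed_of_sum_le_one (hs : s ⊆ edges D) (h : ∑ e ∈ s, Q.y e ≤ 1)
    (he : e ∈ s) (hf : f ∈ s) (heu : IsUsed D Q e) (hfu : IsUsed D Q f) : e = f := by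
  by_contra hne
  have := Finset.add_le_sum (fun x hx => hQ.y_nonneg (hs hx)) he hf hne
  rw [heu.2, hfu.2] at this
  linarith

lemma exists_isUsed_of_sum_eq {t : Finset (Node ι × Node ι)} (hs : s ⊆ edges D)
    (ht : t ⊆ edges D) (hst : ∑ e ∈ s, Q.y e = ∑ e ∈ t, Q.y e) (he : e ∈ s)
    (heu : IsUsed D Q e) : ∃ f ∈ t, IsUsed D Q f := by
  have h₁ : Q.y e ≤ ∑ e ∈ s, Q.y e := Finset.single_le_sum (fun x hx => hQ.y_nonneg (hs hx)) he
  obtain ⟨f, hf, hne⟩ := Finset.exists_ne_zero_of_sum_ne_zero (s := t) (f := Q.y)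
    (by rw [heu.2] at h₁; linarith)
  exact ⟨f, hf, ht hf, (hQ.1 f (ht hf)).resolve_left hne⟩

lemma eq_of_snd_eq_inl (he : IsUsed D Q e) (hf : IsUsed D Q f) (he₂ : e.2 = Sum.inl i)
    (hf₂ : f.2 = Sum.inl i) : e = f :=
  hQ.eq_of_isUsed_of_sum_le_one (Finset.filter_subset _ _) (hQ.sum_inE_le_one i)
    (mem_inE.2 ⟨he.1, he₂⟩) (mem_inE.2 ⟨hf.1, hf₂⟩) he hf

lemma eq_of_fst_eq_inl (he : IsUsed D Q e) (hf : IsUsed D Q f) (he₁ : e.1 = Sum.inl i)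
    (hf₁ : f.1 = Sum.inl i) : e = f :=
  hQ.eq_of_isUsed_of_sum_le_one (Finset.filter_subset _ _)
    (hQ.sum_inE_eq_sum_outE i ▸ hQ.sum_inE_le_one i)
    (mem_outE.2 ⟨he.1, he₁⟩) (mem_outE.2 ⟨hf.1, hf₁⟩) he hf

lemma exists_consecutive_of_snd_eq_inl (he : IsUsed D Q e) (he₂ : e.2 = Sum.inl i) :
    ∃ f, Consecutive D Q e f := by
  obtain ⟨f, hf, hfu⟩ := hQ.exists_isUsed_of_sum_eq (Finset.filter_subset _ _)
    (Finset.filter_subset _ _) (hQ.sum_inE_eq_sum_outE i) (mem_inE.2 ⟨he.1, he₂⟩) he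
  exact ⟨f, he, hfu, he₂.trans (mem_outE.1 hf).2.symm⟩

lemma exists_consecutive_of_fst_eq_inl (hf : IsUsed D Q f) (hf₁ : f.1 = Sum.inl i) :
    ∃ e, Consecutive D Q e f := by
  obtain ⟨e, he, heu⟩ := hQ.exists_isUsed_of_sum_eq (Finset.filter_subset _ _)
    (Finset.filter_subset _ _) (hQ.sum_inE_eq_sum_outE i).symm (mem_outE.2 ⟨hf.1, hf₁⟩) hf
  exact ⟨e, heu, hf, (mem_inE.1 he).2.trans hf₁.symm⟩

lemma zt'_eq_zt (h : Consecutive D Q e f) : Q.zt' e = Q.zt f := by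
  obtain ⟨i, he₂, hf₁⟩ := h.exists_snd_eq_inl
  have hin : ∑ c ∈ inE D (Sum.inl i), Q.zt' c = Q.zt' e :=
    Finset.sum_eq_single_of_mem e (mem_inE.2 ⟨h.1.1, he₂⟩) fun c hc hce =>
      (hQ.eq_zero_of_not_isUsed (mem_inE.1 hc).1
        fun hcu => hce (hQ.eq_of_snd_eq_inl hcu h.1 (mem_inE.1 hc).2 he₂)).2.1
  have hout : ∑ c ∈ outE D (Sum.inl i), Q.zt c = Q.zt f :=
    Finset.sum_eq_single_of_mem f (mem_outE.2 ⟨h.2.1.1, hf₁⟩) fun c hc hcf =>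
      (hQ.eq_zero_of_not_isUsed (mem_outE.1 hc).1
        fun hcu => hcf (hQ.eq_of_fst_eq_inl hcu h.2.1 (mem_outE.1 hc).2 hf₁)).1
  rw [← hin, ← hout, hQ.2.2.2.2.2.2.2.2.2.1 i]

lemma consecutive_rightUnique : Relator.RightUnique (Consecutive D Q) := fun _ _ _ h h' => by
  obtain ⟨i, hi, hf⟩ := h.exists_snd_eq_inl
  exact hQ.eq_of_fst_eq_inl h.2.1 h'.2.1 hf (h'.2.2.symm.trans hi)

lemma consecutive_leftUnique : Relator.LeftUnique (Consecutive D Q) := fun _ _ _ h h' => by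
  obtain ⟨i, he, hi⟩ := h.exists_snd_eq_inl
  exact hQ.eq_of_snd_eq_inl h.1 h'.1 he (h'.2.2.trans hi)

lemma isOrigin_unique (ha : IsOrigin D Q a e) (hb : IsOrigin D Q b e) : a = b := by
  have hswap : Relator.RightUnique (Function.swap (Consecutive D Q)) :=
    fun _ _ _ h h' => hQ.consecutive_leftUnique h h'
  rcases ReflTransGen.total_of_right_unique hswap (reflTransGen_swap.2 ha.2)
      (reflTransGen_swap.2 hb.2) with h | h
  · exact (eq_of_reflTransGen_of_mem_depotEdges ha.1 (reflTransGen_swap.1 h)).symm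
  · exact eq_of_reflTransGen_of_mem_depotEdges hb.1 (reflTransGen_swap.1 h)

lemma isOrigin_iff_of_consecutive (h : Consecutive D Q e f) :
    IsOrigin D Q a f ↔ IsOrigin D Q a e := by
  refine ⟨fun ⟨ha, hr⟩ => ⟨ha, ?_⟩, fun ⟨ha, hr⟩ => ⟨ha, hr.tail h⟩⟩
  rcases hr.cases_tail with hfa | ⟨c, hc, hcf⟩
  · obtain ⟨i, -, hi⟩ := h.exists_snd_eq_inl
    rw [hfa, (mem_depotEdges.1 ha).2] at hi
    simp at hi
  · rwa [hQ.consecutive_leftUnique hcf h] at hc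

/-- Otherwise taking predecessors would map the used edges from which `e` is reachable
injectively into the same set minus `e`, since `e` has no successor. -/
lemma exists_isOrigin (he : IsUsed D Q e) (he₂ : e.2 = Sum.inr true) : ∃ a, IsOrigin D Q a e := by
  by_contra! hno
  set S := Finset.univ.filter fun f => IsUsed D Q f ∧ ReflTransGen (Consecutive D Q) f e
  have heS : e ∈ S := by simp [S, he, ReflTransGen.refl]
  have hpred : ∀ f ∈ S, ∃ c, c ∈ S.erase e ∧ Consecutive D Q c f := by
    intro f hf
    simp only [S, Finset.mem_filter, Finset.mem_univ, true_and] at hf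
    rcases fst_cases_of_mem_edges hf.1.1 with ⟨i, hi⟩ | hi
    · obtain ⟨c, hc⟩ := hQ.exists_consecutive_of_fst_eq_inl hf.1 hi
      refine ⟨c, Finset.mem_erase.2 ⟨?_, ?_⟩, hc⟩
      · intro hce
        obtain ⟨j, hj, -⟩ := hc.exists_snd_eq_inl
        rw [hce, he₂] at hj
        simp at hj
      · simp [S, hc.1, hf.2.head hc]
    · exact absurd ⟨mem_depotEdges.2 ⟨hf.1, hi⟩, hf.2⟩ (hno f)
  have hcard := Finset.card_le_card_of_forall_subsingleton (fun f c => Consecutive D Q c f) hpred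
    fun _ _ _ hf _ hf' => hQ.consecutive_rightUnique hf.2 hf'.2
  exact (Finset.card_erase_lt_of_mem heS).not_ge hcard

lemma eq_of_isOrigin_of_snd_eq_inr_true (he : IsOrigin D Q a e) (hf : IsOrigin D Q a f)
    (he₂ : e.2 = Sum.inr true) (hf₂ : f.2 = Sum.inr true) : e = f := by
  rcases ReflTransGen.total_of_right_unique hQ.consecutive_rightUnique he.2 hf.2 with h | h
  · exact eq_of_reflTransGen_of_snd_eq_inr_true he₂ h
  · exact (eq_of_reflTransGen_of_snd_eq_inr_true hf₂ h).symm

lemma card_depotEdges_le : (depotEdges D Q).card ≤ D.m := by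
  have h : ((depotEdges D Q).card : ℝ) ≤ Q.α :=
    calc ((depotEdges D Q).card : ℝ) = ∑ e ∈ depotEdges D Q, Q.y e := by
          rw [Finset.sum_congr rfl fun e he => (mem_depotEdges.1 he).1.2]
          simp
      _ ≤ ∑ e ∈ outE D (Sum.inr false), Q.y e :=
          Finset.sum_le_sum_of_subset_of_nonneg (Finset.filter_subset _ _)
            fun e he _ => hQ.y_nonneg (mem_outE.1 he).1
      _ = Q.α := hQ.2.2.2.2.2.1
  exact_mod_cast h.trans hQ.2.2.2.2.1

end MICPFeas

section Coloring

variable {ι υ : Type*} [Fintype ι] {D : MTData ι υ} {Q : MICPPoint ι}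

/-- Edges without an origin lie on cycles through segment nodes only; they all go to agent `0`. -/
def tourColor (g : depotEdges D Q ↪ Fin D.m) (e : Node ι × Node ι) : Fin D.m :=
  if h : ∃ a, IsOrigin D Q a e then g ⟨h.choose, h.choose_spec.1⟩ else ⟨0, D.m_pos⟩

def Traverses (g : depotEdges D Q ↪ Fin D.m) (k : Fin D.m) (e : Node ι × Node ι) : Prop :=
  IsUsed D Q e ∧ tourColor g e = k

def tourTime (g : depotEdges D Q ↪ Fin D.m) (j : Node ι) (k : Fin D.m) : ℝ :=
  if h : ∃ e, Traverses g k e ∧ e.1 = j then Q.zt h.choose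
  else if h : ∃ e, Traverses g k e ∧ e.2 = j then Q.zt' h.choose
  else D.tlo j

def toNC (g : depotEdges D Q ↪ Fin D.m) : NCPoint ι D.m where
  y e k := if Traverses g k e then 1 else 0
  l e k := if Traverses g k e then Q.l e else 0
  lxy e k := if Traverses g k e then Q.lxy e else 0
  zp e k := if Traverses g k e then Q.zp e else 0
  zt e k := if Traverses g k e then Q.zt e else 0
  zp' e k := if Traverses g k e then Q.zp' e else 0
  zt' e k := if Traverses g k e then Q.zt' e else 0
  t := tourTime g
  p j k := D.pos j + (tourTime g j k - D.tlo j) • D.vel j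

variable (g : depotEdges D Q ↪ Fin D.m) {a e f : Node ι × Node ι} {k : Fin D.m}

lemma sum_ite_traverses {M : Type*} [AddCommMonoid M] (x : M) :
    ∑ k, (if Traverses g k e then x else 0) = if IsUsed D Q e then x else 0 := by
  by_cases h : IsUsed D Q e <;> simp [Traverses, h]

namespace MICPFeas

variable (hQ : MICPFeas D Q)
include hQ

lemma tourColor_eq (ha : IsOrigin D Q a e) : tourColor g e = g ⟨a, ha.1⟩ := by
  have h : ∃ a, IsOrigin D Q a e := ⟨a, ha⟩
  rw [tourColor, dif_pos h]
  exact congrArg g (Subtype.ext (hQ.isOrigin_unique h.choose_spec ha))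

lemma tourColor_eq_of_consecutive (h : Consecutive D Q e f) : tourColor g e = tourColor g f := by
  by_cases ho : ∃ a, IsOrigin D Q a e
  · obtain ⟨a, ha⟩ := ho
    rw [hQ.tourColor_eq g ha, hQ.tourColor_eq g ((hQ.isOrigin_iff_of_consecutive h).2 ha)]
  · have ho' : ¬ ∃ a, IsOrigin D Q a f :=
      fun ⟨a, ha⟩ => ho ⟨a, (hQ.isOrigin_iff_of_consecutive h).1 ha⟩
    rw [tourColor, tourColor, dif_neg ho, dif_neg ho']

lemma eq_of_fst_eq_of_traverses (he : Traverses g k e) (hf : Traverses g k f) (h : e.1 = f.1) :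
    e = f := by
  rcases fst_cases_of_mem_edges he.1.1 with ⟨i, hi⟩ | hi
  · exact hQ.eq_of_fst_eq_inl he.1 hf.1 hi (h.symm.trans hi)
  · have hea : e ∈ depotEdges D Q := mem_depotEdges.2 ⟨he.1, hi⟩
    have hfa : f ∈ depotEdges D Q := mem_depotEdges.2 ⟨hf.1, h.symm.trans hi⟩
    have hc : g ⟨e, hea⟩ = g ⟨f, hfa⟩ := by
      rw [← hQ.tourColor_eq g ⟨hea, .refl⟩, ← hQ.tourColor_eq g ⟨hfa, .refl⟩, he.2, hf.2]
    exact congrArg Subtype.val (g.injective hc)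

lemma eq_of_snd_eq_of_traverses (he : Traverses g k e) (hf : Traverses g k f) (h : e.2 = f.2) :
    e = f := by
  rcases snd_cases_of_mem_edges he.1.1 with ⟨i, hi⟩ | hi
  · exact hQ.eq_of_snd_eq_inl he.1 hf.1 hi (h.symm.trans hi)
  · obtain ⟨a, ha⟩ := hQ.exists_isOrigin he.1 hi
    obtain ⟨b, hb⟩ := hQ.exists_isOrigin hf.1 (h.symm.trans hi)
    have hc : g ⟨a, ha.1⟩ = g ⟨b, hb.1⟩ := by
      rw [← hQ.tourColor_eq g ha, ← hQ.tourColor_eq g hb, he.2, hf.2]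
    obtain rfl : a = b := congrArg Subtype.val (g.injective hc)
    exact hQ.eq_of_isOrigin_of_snd_eq_inr_true ha hb hi (h.symm.trans hi)

lemma tourTime_fst (he : Traverses g k e) : tourTime g e.1 k = Q.zt e := by
  have h : ∃ f, Traverses g k f ∧ f.1 = e.1 := ⟨e, he, rfl⟩
  rw [tourTime, dif_pos h]
  obtain ⟨hf, hf₁⟩ := h.choose_spec
  rw [hQ.eq_of_fst_eq_of_traverses g hf he hf₁]

lemma tourTime_snd (he : Traverses g k e) : tourTime g e.2 k = Q.zt' e := by
  by_cases h : ∃ f, Traverses g k f ∧ f.1 = e.2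
  · rw [tourTime, dif_pos h]
    obtain ⟨hf, hf₁⟩ := h.choose_spec
    exact (hQ.zt'_eq_zt ⟨he.1, hf.1, hf₁.symm⟩).symm
  · have h' : ∃ f, Traverses g k f ∧ f.2 = e.2 := ⟨e, he, rfl⟩
    rw [tourTime, dif_neg h, dif_pos h']
    obtain ⟨hf, hf₂⟩ := h'.choose_spec
    rw [hQ.eq_of_snd_eq_of_traverses g hf he hf₂]

lemma tourTime_mem_window (j : Node ι) (k : Fin D.m) :
    D.tlo j ≤ tourTime g j k ∧ tourTime g j k ≤ D.thi j := by
  unfold tourTime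
  split_ifs with h₁ h₂
  · have h := (hQ.zt_mem_window h₁.choose_spec.1.1).1
    rwa [h₁.choose_spec.2] at h
  · have h := (hQ.zt_mem_window h₂.choose_spec.1.1).2
    rwa [h₂.choose_spec.2] at h
  · exact ⟨le_rfl, D.tw j⟩

lemma card_filter_inE_le_one (j : Node ι) (k : Fin D.m) :
    ((inE D j).filter (Traverses g k)).card ≤ 1 :=
  Finset.card_le_one.2 fun e he f hf => by
    simp only [Finset.mem_filter, mem_inE] at he hf
    exact hQ.eq_of_snd_eq_of_traverses g he.2 hf.2 (he.1.2.trans hf.1.2.symm)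

lemma card_filter_outE_le_one (j : Node ι) (k : Fin D.m) :
    ((outE D j).filter (Traverses g k)).card ≤ 1 :=
  Finset.card_le_one.2 fun e he f hf => by
    simp only [Finset.mem_filter, mem_outE] at he hf
    exact hQ.eq_of_fst_eq_of_traverses g he.2 hf.2 (he.1.2.trans hf.1.2.symm)

lemma filter_inE_nonempty_iff (i : ι) (k : Fin D.m) :
    ((inE D (Sum.inl i)).filter (Traverses g k)).Nonempty ↔
      ((outE D (Sum.inl i)).filter (Traverses g k)).Nonempty := by
  simp only [Finset.Nonempty, Finset.mem_filter, mem_inE, mem_outE]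
  constructor
  · rintro ⟨e, ⟨-, he₂⟩, het⟩
    obtain ⟨f, hf⟩ := hQ.exists_consecutive_of_snd_eq_inl het.1 he₂
    exact ⟨f, ⟨hf.2.1.1, hf.2.2.symm.trans he₂⟩, hf.2.1,
      (hQ.tourColor_eq_of_consecutive g hf).symm.trans het.2⟩
  · rintro ⟨f, ⟨-, hf₁⟩, hft⟩
    obtain ⟨e, he⟩ := hQ.exists_consecutive_of_fst_eq_inl hft.1 hf₁
    exact ⟨e, ⟨he.1.1, he.2.2.trans hf₁⟩, he.1,
      (hQ.tourColor_eq_of_consecutive g he).trans hft.2⟩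

lemma card_filter_inE_eq_card_filter_outE (i : ι) (k : Fin D.m) :
    ((inE D (Sum.inl i)).filter (Traverses g k)).card =
      ((outE D (Sum.inl i)).filter (Traverses g k)).card := by
  have hiff := hQ.filter_inE_nonempty_iff g i k
  rw [← Finset.card_pos, ← Finset.card_pos] at hiff
  have hin := hQ.card_filter_inE_le_one g (Sum.inl i) k
  have hout := hQ.card_filter_outE_le_one g (Sum.inl i) k
  omega

lemma sum_toNC_y (he : e ∈ edges D) : ∑ k, (toNC g).y e k = Q.y e := by
  simp only [toNC, sum_ite_traverses]
  rcases hQ.1 e he with h | h <;> simp [h, IsUsed, he]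

lemma toNC_feasible : NCFeas D (toNC g) := by
  refine ⟨fun e _ k => ?_, fun e he k => ?_, fun k => ?_, fun k => ?_, fun u => ?_, fun i k => ?_,
    hQ.tourTime_mem_window g, fun _ _ => rfl, fun e he k => ?_⟩
  · by_cases h : Traverses g k e <;> simp [toNC, h]
  · by_cases h : Traverses g k e <;> simp [toNC, h, hQ.2.1 e he]
  · simpa [toNC, Finset.sum_boole] using hQ.card_filter_outE_le_one g (Sum.inr false) k
  · simpa [toNC, Finset.sum_boole] using hQ.card_filter_inE_le_one g (Sum.inr true) k
  · rw [← hQ.sum_cluster u, Finset.sum_comm]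
    refine Finset.sum_congr rfl fun i _ => ?_
    rw [Finset.sum_comm]
    exact Finset.sum_congr rfl fun e he => hQ.sum_toNC_y g (mem_inE.1 he).1
  · simp only [toNC, Finset.sum_boole, hQ.card_filter_inE_eq_card_filter_outE g i k]
  · by_cases h : Traverses g k e
    · obtain ⟨-, -, -, -, hzp, hzp', hl, hlxy, hnorm⟩ := hQ.2.2.2.2.2.2.2.2.2.2 e he
      simp only [toNC, if_pos h, hQ.tourTime_fst g h, hQ.tourTime_snd g h, one_smul, one_mul]
      refine ⟨?_, trivial, ?_, trivial, hl, hlxy, hnorm⟩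
      · rw [hzp, h.1.2]; module
      · rw [hzp', h.1.2]; module
    · simp [toNC, h]

lemma NCObj_toNC : NCObj D (toNC g) = MICPObj D Q := by
  rw [NCObj, MICPObj, Finset.sum_comm]
  refine Finset.sum_congr rfl fun e he => ?_
  simp only [toNC, sum_ite_traverses]
  split_ifs with h
  · rfl
  · exact (hQ.eq_zero_of_not_isUsed he h).2.2.symm

end MICPFeas

end Coloring

lemma sum_eq_card_filter_eq_one {α R : Type*} [AddCommMonoidWithOne R] {s : Finset α}
    {f : α → R} (h : ∀ a ∈ s, f a = 0 ∨ f a = 1) :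
    ∑ a ∈ s, f a = ((s.filter fun a => f a = 1).card : R) := by
  rw [← Finset.sum_boole]
  refine Finset.sum_congr rfl fun a ha => ?_
  rcases h a ha with h | h <;> simp [h]

section Aggregate

variable {ι υ : Type*} [Fintype ι] {D : MTData ι υ} {P : NCPoint ι D.m}

variable (D P) in
def aggregate : MICPPoint ι where
  y e := ∑ k, P.y e k
  l e := ∑ k, P.l e k
  lxy e := ∑ k, P.lxy e k
  zp e := ∑ k, P.zp e k
  zt e := ∑ k, P.zt e k
  zp' e := ∑ k, P.zp' e k
  zt' e := ∑ k, P.zt' e k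
  α := ∑ e ∈ outE D (Sum.inr false), ∑ k, P.y e k

lemma aggregate_α : (aggregate D P).α = ∑ k, ∑ e ∈ outE D (Sum.inr false), P.y e k :=
  Finset.sum_comm

lemma MICPObj_aggregate : MICPObj D (aggregate D P) = NCObj D P := by
  dsimp only [MICPObj, NCObj, aggregate]
  exact Finset.sum_comm

namespace NCFeas

variable (hP : NCFeas D P) {e : Node ι × Node ι}
include hP

lemma sum_inE_eq_sum_outE (i : ι) (k : Fin D.m) :
    ∑ e ∈ inE D (Sum.inl i), P.y e k = ∑ e ∈ outE D (Sum.inl i), P.y e k :=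
  hP.2.2.2.2.2.1 i k

lemma sum_cluster (u : υ) :
    ∑ k, ∑ i ∈ Finset.univ.filter (fun i => D.cl i = u), ∑ e ∈ inE D (Sum.inl i), P.y e k = 1 :=
  hP.2.2.2.2.1 u

lemma y_nonneg (he : e ∈ edges D) (k : Fin D.m) : 0 ≤ P.y e k := by
  rcases hP.1 e he k with h | h <;> simp [h]

lemma sum_inE_zt' (j : Node ι) (k : Fin D.m) :
    ∑ e ∈ inE D j, P.zt' e k = P.t j k * ∑ e ∈ inE D j, P.y e k := by
  rw [Finset.mul_sum]
  refine Finset.sum_congr rfl fun e he => ?_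
  rw [(hP.2.2.2.2.2.2.2.2 e (mem_inE.1 he).1 k).2.2.2.1, (mem_inE.1 he).2, mul_comm]

lemma sum_outE_zt (j : Node ι) (k : Fin D.m) :
    ∑ e ∈ outE D j, P.zt e k = P.t j k * ∑ e ∈ outE D j, P.y e k := by
  rw [Finset.mul_sum]
  refine Finset.sum_congr rfl fun e he => ?_
  rw [(hP.2.2.2.2.2.2.2.2 e (mem_outE.1 he).1 k).2.1, (mem_outE.1 he).2, mul_comm]

lemma sum_inE_inr_true_eq (k : Fin D.m) :
    ∑ e ∈ inE D (Sum.inr true), P.y e k = ∑ e ∈ outE D (Sum.inr false), P.y e k := by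
  have h := sum_edges_mul_sub_eq (fun e => P.y e k) (fun _ => 1)
    fun i => hP.sum_inE_eq_sum_outE i k
  simp only [sub_self, mul_zero, Finset.sum_const_zero, one_mul] at h
  linarith

/-- Along each edge an agent covers at most `vmax` times the elapsed time, and the elapsed times
telescope. -/
lemma sum_l_le (k : Fin D.m) :
    ∑ e ∈ edges D, P.l e k ≤ D.vmax * (P.t (Sum.inr true) k * ∑ e ∈ inE D (Sum.inr true), P.y e k -
      P.t (Sum.inr false) k * ∑ e ∈ outE D (Sum.inr false), P.y e k) := by
  rw [← sum_edges_mul_sub_eq (fun e => P.y e k) (fun j => P.t j k)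
    fun i => hP.sum_inE_eq_sum_outE i k, Finset.mul_sum]
  refine Finset.sum_le_sum fun e he => ?_
  obtain ⟨-, hzt, -, hzt', hl, -⟩ := hP.2.2.2.2.2.2.2.2 e he k
  rwa [mul_sub, ← hzt, ← hzt']

lemma obj_nonneg : 0 ≤ NCObj D P :=
  Finset.sum_nonneg fun k _ => Finset.sum_nonneg fun e he => hP.2.1 e he k

lemma obj_eq_zero_of_forall_sum_outE_eq_zero
    (h : ∀ k, ∑ e ∈ outE D (Sum.inr false), P.y e k = 0) : NCObj D P = 0 := by
  refine le_antisymm (Finset.sum_nonpos fun k _ => ?_) hP.obj_nonneg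
  have hk := hP.sum_l_le k
  rwa [hP.sum_inE_inr_true_eq k, h k, mul_zero, mul_zero, sub_zero, mul_zero] at hk

lemma sum_agents_inE_le_one (i : ι) : ∑ k, ∑ e ∈ inE D (Sum.inl i), P.y e k ≤ 1 :=
  calc ∑ k, ∑ e ∈ inE D (Sum.inl i), P.y e k
      ≤ ∑ k, ∑ j ∈ Finset.univ.filter (fun j => D.cl j = D.cl i),
          ∑ e ∈ inE D (Sum.inl j), P.y e k :=
        Finset.sum_le_sum fun k _ => Finset.single_le_sum
          (f := fun j => ∑ e ∈ inE D (Sum.inl j), P.y e k)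
          (fun _ _ => Finset.sum_nonneg fun _ he => hP.y_nonneg (mem_inE.1 he).1 k) (by simp)
    _ = 1 := hP.sum_cluster (D.cl i)

lemma sum_y_le_one (he : e ∈ edges D) : ∑ k, P.y e k ≤ 1 := by
  rcases snd_cases_of_mem_edges he with ⟨i, hi⟩ | hi
  · calc ∑ k, P.y e k ≤ ∑ k, ∑ e ∈ inE D (Sum.inl i), P.y e k :=
          Finset.sum_le_sum fun k _ => Finset.single_le_sum
            (fun _ hx => hP.y_nonneg (mem_inE.1 hx).1 k) (mem_inE.2 ⟨he, hi⟩)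
      _ ≤ 1 := hP.sum_agents_inE_le_one i
  · obtain ⟨i, hi⟩ := fst_eq_inl_of_snd_eq_inr_true he hi
    calc ∑ k, P.y e k ≤ ∑ k, ∑ e ∈ outE D (Sum.inl i), P.y e k :=
          Finset.sum_le_sum fun k _ => Finset.single_le_sum
            (fun _ hx => hP.y_nonneg (mem_outE.1 hx).1 k) (mem_outE.2 ⟨he, hi⟩)
      _ = ∑ k, ∑ e ∈ inE D (Sum.inl i), P.y e k :=
          Finset.sum_congr rfl fun k _ => (hP.sum_inE_eq_sum_outE i k).symm
      _ ≤ 1 := hP.sum_agents_inE_le_one i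

lemma sum_y_eq_zero_or_one (he : e ∈ edges D) : ∑ k, P.y e k = 0 ∨ ∑ k, P.y e k = 1 := by
  have h := hP.sum_y_le_one he
  rw [sum_eq_card_filter_eq_one fun k _ => hP.1 e he k] at h ⊢
  norm_cast at h ⊢
  omega

lemma aggregate_α_eq_card : (aggregate D P).α =
    ((outE D (Sum.inr false)).filter fun e => ∑ k, P.y e k = 1).card :=
  sum_eq_card_filter_eq_one fun _ he => hP.sum_y_eq_zero_or_one (mem_outE.1 he).1

lemma aggregate_edge (he : e ∈ edges D) :
    (∑ k, P.y e k) * D.tlo e.1 ≤ ∑ k, P.zt e k ∧ ∑ k, P.zt e k ≤ (∑ k, P.y e k) * D.thi e.1 ∧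
    (∑ k, P.y e k) * D.tlo e.2 ≤ ∑ k, P.zt' e k ∧ ∑ k, P.zt' e k ≤ (∑ k, P.y e k) * D.thi e.2 ∧
    ∑ k, P.zp e k =
      (∑ k, P.zt e k) • D.vel e.1 + (∑ k, P.y e k) • (D.pos e.1 - D.tlo e.1 • D.vel e.1) ∧
    ∑ k, P.zp' e k =
      (∑ k, P.zt' e k) • D.vel e.2 + (∑ k, P.y e k) • (D.pos e.2 - D.tlo e.2 • D.vel e.2) ∧
    ∑ k, P.l e k ≤ D.vmax * (∑ k, P.zt' e k - ∑ k, P.zt e k) ∧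
    ∑ k, P.lxy e k = ∑ k, P.zp' e k - ∑ k, P.zp e k ∧
    ‖∑ k, P.lxy e k‖ ^ 2 ≤ (∑ k, P.l e k) ^ 2 := by
  have htw := hP.2.2.2.2.2.2.1
  have hp := hP.2.2.2.2.2.2.2.1
  have hedge := hP.2.2.2.2.2.2.2.2 e he
  have hlxy : ∀ k, ‖P.lxy e k‖ ≤ P.l e k := fun k =>
    (pow_le_pow_iff_left₀ (norm_nonneg _) (hP.2.1 e he k) two_ne_zero).1 (hedge k).2.2.2.2.2.2
  simp only [Finset.sum_mul, Finset.mul_sum, ← Finset.sum_sub_distrib, Finset.sum_smul,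
    ← Finset.sum_add_distrib]
  refine ⟨Finset.sum_le_sum fun k _ => ?_, Finset.sum_le_sum fun k _ => ?_,
    Finset.sum_le_sum fun k _ => ?_, Finset.sum_le_sum fun k _ => ?_,
    Finset.sum_congr rfl fun k _ => ?_, Finset.sum_congr rfl fun k _ => ?_,
    Finset.sum_le_sum fun k _ => (hedge k).2.2.2.2.1,
    Finset.sum_congr rfl fun k _ => (hedge k).2.2.2.2.2.1, ?_⟩
  · rw [(hedge k).2.1]; exact mul_le_mul_of_nonneg_left (htw _ k).1 (hP.y_nonneg he k)
  · rw [(hedge k).2.1]; exact mul_le_mul_of_nonneg_left (htw _ k).2 (hP.y_nonneg he k)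
  · rw [(hedge k).2.2.2.1]; exact mul_le_mul_of_nonneg_left (htw _ k).1 (hP.y_nonneg he k)
  · rw [(hedge k).2.2.2.1]; exact mul_le_mul_of_nonneg_left (htw _ k).2 (hP.y_nonneg he k)
  · rw [(hedge k).1, (hedge k).2.1, hp]; module
  · rw [(hedge k).2.2.1, (hedge k).2.2.2.1, hp]; module
  · exact pow_le_pow_left₀ (norm_nonneg _)
      ((norm_sum_le _ _).trans (Finset.sum_le_sum fun k _ => hlxy k)) 2

lemma micpFeas_aggregate (hα : 1 ≤ (aggregate D P).α) : MICPFeas D (aggregate D P) := by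
  dsimp only [MICPFeas, aggregate]
  refine ⟨fun e he => hP.sum_y_eq_zero_or_one he,
    fun e he => Finset.sum_nonneg fun k _ => hP.2.1 e he k,
    ⟨_, hP.aggregate_α_eq_card.trans (Int.cast_natCast _).symm⟩, hα, ?_, rfl, ?_, fun u => ?_,
    fun i => ?_, fun i => ?_, fun e he => hP.aggregate_edge he⟩
  · calc (aggregate D P).α = ∑ k, ∑ e ∈ outE D (Sum.inr false), P.y e k := aggregate_α
      _ ≤ ∑ _k : Fin D.m, (1 : ℝ) := Finset.sum_le_sum fun k _ => hP.2.2.1 k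
      _ = D.m := by simp
  · exact Finset.sum_comm.trans
      ((Finset.sum_congr rfl fun k _ => hP.sum_inE_inr_true_eq k).trans Finset.sum_comm)
  · exact (Finset.sum_comm.trans (Finset.sum_congr rfl fun i _ => Finset.sum_comm)).symm.trans
      (hP.sum_cluster u)
  · exact Finset.sum_comm.trans
      ((Finset.sum_congr rfl fun k _ => hP.sum_inE_eq_sum_outE i k).trans Finset.sum_comm)
  · refine Finset.sum_comm.trans ((Finset.sum_congr rfl fun k _ => ?_).trans Finset.sum_comm)
    rw [hP.sum_inE_zt', hP.sum_outE_zt, hP.sum_inE_eq_sum_outE i k]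

lemma obj_eq_zero_or_exists_micp :
    NCObj D P = 0 ∨ ∃ Q, MICPFeas D Q ∧ MICPObj D Q = NCObj D P := by
  rcases Nat.eq_zero_or_pos
      ((outE D (Sum.inr false)).filter fun e => ∑ k, P.y e k = 1).card with h | h
  · left
    have hα : ∑ k, ∑ e ∈ outE D (Sum.inr false), P.y e k = 0 := by
      rw [← aggregate_α, hP.aggregate_α_eq_card, h, Nat.cast_zero]
    refine hP.obj_eq_zero_of_forall_sum_outE_eq_zero fun k => ?_
    exact (Finset.sum_eq_zero_iff_of_nonneg fun k _ => Finset.sum_nonneg fun e he =>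
      hP.y_nonneg (mem_outE.1 he).1 k).1 hα k (Finset.mem_univ k)
  · right
    refine ⟨aggregate D P, hP.micpFeas_aggregate ?_, MICPObj_aggregate⟩
    rw [hP.aggregate_α_eq_card]
    exact_mod_cast h

end NCFeas

end Aggregate

lemma Real.sInf_le_sInf_of_subset_insert_zero {A B : Set ℝ} (hA : ∀ a ∈ A, 0 ≤ a)
    (hBA : B ⊆ A) (hAB : A ⊆ insert 0 B) : sInf A ≤ sInf B := by
  rcases B.eq_empty_or_nonempty with rfl | hB
  · rw [Real.sInf_empty]
    exact Real.sInf_nonpos fun a ha => ((hAB ha).resolve_right (Set.notMem_empty a)).le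
  · exact csInf_le_csInf ⟨0, hA⟩ hB hBA

theorem nonconvex_feasible_of_micp_feasible_general
    {ι υ : Type*} [Fintype ι] (D : MTData ι υ) :
    (∀ Q : MICPPoint ι, MICPFeas D Q →
      ∃ P : NCPoint ι D.m, NCFeas D P ∧ NCObj D P = MICPObj D Q) ∧
    sInf {c : ℝ | ∃ P : NCPoint ι D.m, NCFeas D P ∧ NCObj D P = c} ≤
      sInf {c : ℝ | ∃ Q : MICPPoint ι, MICPFeas D Q ∧ MICPObj D Q = c} := by
  have hNC : ∀ Q : MICPPoint ι, MICPFeas D Q →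
      ∃ P : NCPoint ι D.m, NCFeas D P ∧ NCObj D P = MICPObj D Q := by
    intro Q hQ
    obtain ⟨g⟩ := Function.Embedding.nonempty_of_card_le (α := depotEdges D Q) (β := Fin D.m)
      (by simpa using hQ.card_depotEdges_le)
    exact ⟨toNC g, hQ.toNC_feasible g, hQ.NCObj_toNC g⟩
  refine ⟨hNC, Real.sInf_le_sInf_of_subset_insert_zero ?_ ?_ ?_⟩
  · rintro _ ⟨P, hP, rfl⟩
    exact hP.obj_nonneg
  · rintro _ ⟨Q, hQ, rfl⟩
    exact hNC Q hQ
  · rintro _ ⟨P, hP, rfl⟩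
    exact hP.obj_eq_zero_or_exists_micp.imp id fun ⟨Q, hQ, hobj⟩ => ⟨Q, hQ, hobj⟩

/-- For every feasible point of the MICP formulation there is a
feasible point of the nonconvex formulation with the same objective value.
Consequently, the optimal value of the nonconvex formulation is at most the optimal
value of the MICP formulation. -/
theorem nonconvex_feasible_of_micp_feasible
    {ι υ : Type*} [Fintype ι] [Fintype υ] (D : MTData ι υ) :
    (∀ Q : MICPPoint ι, MICPFeas D Q →
      ∃ P : NCPoint ι D.m, NCFeas D P ∧ NCObj D P = MICPObj D Q) ∧
    sInf {c : ℝ | ∃ P : NCPoint ι D.m, NCFeas D P ∧ NCObj D P = c} ≤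
      sInf {c : ℝ | ∃ Q : MICPPoint ι, MICPFeas D Q ∧ MICPObj D Q = c} :=
  nonconvex_feasible_of_micp_feasible_general D

end
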